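/- Every term of the sequence α_k (α_1 = 1/2, α_k = (1/2)·Σ_{j=1}^{k-1} α_j α_{k-j}) is positive, and Σ_{k=1}^{∞} α_k t^k converges for every t with |t| ≤ 1. -/

import Mathlib

theorem alpha_pos_and_summable (α : ℕ → ℝ)
    (hα1 : α 1 = 1/2)
    (hrec : ∀ k, 2 ≤ k → α k = (1/2) * ∑ j ∈ Finset.Ico 1 k, α j * α (k - j)) :
    (∀ k, 1 ≤ k → 0 < α k) ∧
    (∀ t : ℝ, |t| ≤ 1 → Summable (fun k : ℕ => α (k + 1) * t ^ (k + 1))) := by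
  have hpos : ∀ k, 1 ≤ k → 0 < α k := by
    intro k
    induction k using Nat.strong_induction_on with
    | _ k ih =>
      intro hk1
      rcases eq_or_lt_of_le hk1 with h1 | h2
      · rw [← h1, hα1]; norm_num
      · rw [hrec k h2]
        have : (0:ℝ) < ∑ j ∈ Finset.Ico 1 k, α j * α (k - j) := by
          apply Finset.sum_pos
          · intro j hj
            rw [Finset.mem_Ico] at hj
            exact mul_pos (ih j (by omega) hj.1)
              (ih (k - j) (by omega) (by omega))
          · exact ⟨1, Finset.mem_Ico.mpr ⟨le_refl 1, h2⟩⟩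
        linarith
  refine ⟨hpos, ?_⟩
  -- partial sums bounded by 1
  have hbound : ∀ n, ∑ k ∈ Finset.Ico 1 (n + 1), α k ≤ 1 := by
    intro n
    induction n with
    | zero => simp
    | succ n ih =>
      have hT0 : (0:ℝ) ≤ ∑ k ∈ Finset.Ico 1 (n + 1), α k :=
        Finset.sum_nonneg fun k hk =>
          (hpos k (Finset.mem_Ico.mp hk).1).le
      rw [Finset.sum_eq_sum_Ico_succ_bot (by omega : 1 < n + 1 + 1)]
      have hstep : ∑ k ∈ Finset.Ico 2 (n + 2), α k
          = (1/2) * ∑ k ∈ Finset.Ico 2 (n + 2),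
              ∑ j ∈ Finset.Ico 1 k, α j * α (k - j) := by
        rw [Finset.mul_sum]
        exact Finset.sum_congr rfl fun k hk =>
          hrec k (Finset.mem_Ico.mp hk).1
      have hD : ∑ k ∈ Finset.Ico 2 (n + 2), ∑ j ∈ Finset.Ico 1 k, α j * α (k - j)
          ≤ (∑ a ∈ Finset.Ico 1 (n + 1), α a) * (∑ a ∈ Finset.Ico 1 (n + 1), α a) := by
        rw [Finset.sum_mul_sum, ← Finset.sum_product']
        rw [Finset.sum_sigma']
        have hbij : ∑ p ∈ (Finset.Ico 2 (n + 2)).sigma (fun k => Finset.Ico 1 k),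
              α p.2 * α (p.1 - p.2)
            = ∑ q ∈ ((Finset.Ico 1 (n + 1)) ×ˢ (Finset.Ico 1 (n + 1))).filter
                (fun q => q.1 + q.2 ≤ n + 1), α q.1 * α q.2 := by
          apply Finset.sum_nbij' (fun p => (p.2, p.1 - p.2)) (fun q => ⟨q.1 + q.2, q.1⟩)
          · intro p hp
            simp only [Finset.mem_sigma, Finset.mem_Ico] at hp
            simp only [Finset.mem_filter, Finset.mem_product, Finset.mem_Ico]
            omega
          · intro q hq
            simp only [Finset.mem_filter, Finset.mem_product, Finset.mem_Ico] at hq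
            simp only [Finset.mem_sigma, Finset.mem_Ico]
            omega
          · intro p hp
            simp only [Finset.mem_sigma, Finset.mem_Ico] at hp
            have : p.snd + (p.fst - p.snd) = p.fst := by omega
            rw [this]
          · intro q hq
            simp only [Finset.mem_filter, Finset.mem_product, Finset.mem_Ico] at hq
            simp only [Nat.add_sub_cancel_left]
          · intro p hp
            rfl
        rw [hbij]
        apply Finset.sum_le_sum_of_subset_of_nonneg (Finset.filter_subset _ _)
        intro q hq _
        simp only [Finset.mem_product, Finset.mem_Ico] at hq
        exact (mul_pos (hpos q.1 hq.1.1) (hpos q.2 hq.2.1)).le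
      have hsq : (∑ a ∈ Finset.Ico 1 (n + 1), α a) * (∑ a ∈ Finset.Ico 1 (n + 1), α a)
          ≤ 1 := by nlinarith
      rw [hα1, hstep]
      nlinarith
  -- summability of α (k+1)
  have hsum : Summable (fun k : ℕ => α (k + 1)) := by
    apply summable_of_sum_range_le (c := 1)
    · intro k; exact (hpos (k + 1) (by omega)).le
    · intro n
      have : ∑ i ∈ Finset.range n, α (i + 1) = ∑ k ∈ Finset.Ico 1 (n + 1), α k := by
        rw [Finset.sum_Ico_eq_sum_range]
        simp [add_comm]
      rw [this]; exact hbound n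
  intro t ht
  apply Summable.of_norm_bounded hsum
  intro k
  rw [norm_mul, norm_pow]
  have h1 : ‖α (k + 1)‖ = α (k + 1) :=
    Real.norm_of_nonneg (hpos (k + 1) (by omega)).le
  have h2 : ‖t‖ ^ (k + 1) ≤ 1 :=
    pow_le_one₀ (norm_nonneg t) (by rwa [Real.norm_eq_abs])
  calc ‖α (k + 1)‖ * ‖t‖ ^ (k + 1) ≤ ‖α (k + 1)‖ * 1 :=
        mul_le_mul_of_nonneg_left h2 (norm_nonneg _)
    _ = α (k + 1) := by rw [mul_one, h1]
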